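/- arXiv:1411.0961 — 5 statements merged into one kernel-verified Lean document; each statement's English description precedes it below -/
import Mathlib

section
/- For every A, B, C ∈ SL(2,ℝ) one has aire(B,C) − aire(A·B, C) + aire(A, B·C) − aire(A,B) = 0; that is, aire is a 2-cocycle on SL(2,ℝ) with values in ℤ ⊂ ℝ. -/
lemma my_sign_mul (x y : ℝ) : Real.sign (x * y) = Real.sign x * Real.sign y := by
  rcases lt_trichotomy x 0 with hx|rfl|hx <;> rcases lt_trichotomy y 0 with hy|rfl|hy
  · rw [Real.sign_of_pos (mul_pos_of_neg_of_neg hx hy), Real.sign_of_neg hx,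
      Real.sign_of_neg hy]; norm_num
  · simp [Real.sign_zero]
  · rw [Real.sign_of_neg (mul_neg_of_neg_of_pos hx hy), Real.sign_of_neg hx,
      Real.sign_of_pos hy]; norm_num
  · simp [Real.sign_zero]
  · simp [Real.sign_zero]
  · simp [Real.sign_zero]
  · rw [Real.sign_of_neg (mul_neg_of_pos_of_neg hx hy), Real.sign_of_pos hx,
      Real.sign_of_neg hy]; norm_num
  · simp [Real.sign_zero]
  · rw [Real.sign_of_pos (mul_pos hx hy), Real.sign_of_pos hx, Real.sign_of_pos hy]; norm_num

/-- The lower-left entry of a matrix in `SL(2, ℝ)`. -/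
noncomputable def lowerLeft (M : Matrix.SpecialLinearGroup (Fin 2) ℝ) : ℝ :=
  (M : Matrix (Fin 2) (Fin 2) ℝ) 1 0

lemma my_det (M : Matrix.SpecialLinearGroup (Fin 2) ℝ) :
    (M : Matrix (Fin 2) (Fin 2) ℝ) 0 0 * (M : Matrix (Fin 2) (Fin 2) ℝ) 1 1
      - (M : Matrix (Fin 2) (Fin 2) ℝ) 0 1 * (M : Matrix (Fin 2) (Fin 2) ℝ) 1 0 = 1 := by
  have := M.prop
  rwa [Matrix.det_fin_two] at this

lemma ll_mul (M N : Matrix.SpecialLinearGroup (Fin 2) ℝ) :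
    lowerLeft (M * N) = lowerLeft M * (N : Matrix (Fin 2) (Fin 2) ℝ) 0 0
      + (M : Matrix (Fin 2) (Fin 2) ℝ) 1 1 * lowerLeft N := by
  simp [lowerLeft, Matrix.SpecialLinearGroup.coe_mul, Matrix.mul_apply, Fin.sum_univ_two]

lemma ll_t1 (M N : Matrix.SpecialLinearGroup (Fin 2) ℝ)
    (hm : lowerLeft M = 0) (hn : lowerLeft N = 0) : lowerLeft (M * N) = 0 := by
  rw [ll_mul, hm, hn]; ring

lemma ll_t2 (M N : Matrix.SpecialLinearGroup (Fin 2) ℝ)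
    (hm : lowerLeft M = 0) (hmn : lowerLeft (M * N) = 0) : lowerLeft N = 0 := by
  have e := ll_mul M N
  rw [hm, hmn] at e
  have hd := my_det M
  rw [show (M : Matrix (Fin 2) (Fin 2) ℝ) 1 0 = lowerLeft M from rfl, hm] at hd
  have h11 : (M : Matrix (Fin 2) (Fin 2) ℝ) 1 1 ≠ 0 := by
    intro h0; rw [h0] at hd; simp at hd
  have : (M : Matrix (Fin 2) (Fin 2) ℝ) 1 1 * lowerLeft N = 0 := by linarith
  rcases mul_eq_zero.mp this with h | h
  · exact absurd h h11
  · exact h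

lemma ll_t3 (M N : Matrix.SpecialLinearGroup (Fin 2) ℝ)
    (hn : lowerLeft N = 0) (hmn : lowerLeft (M * N) = 0) : lowerLeft M = 0 := by
  have e := ll_mul M N
  rw [hn, hmn] at e
  have hd := my_det N
  rw [show (N : Matrix (Fin 2) (Fin 2) ℝ) 1 0 = lowerLeft N from rfl, hn] at hd
  have h00 : (N : Matrix (Fin 2) (Fin 2) ℝ) 0 0 ≠ 0 := by
    intro h0; rw [h0] at hd; simp at hd
  have : lowerLeft M * (N : Matrix (Fin 2) (Fin 2) ℝ) 0 0 = 0 := by linarith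
  rcases mul_eq_zero.mp this with h | h
  · exact h
  · exact absurd h h00

lemma pluck (A B C : Matrix.SpecialLinearGroup (Fin 2) ℝ) :
    lowerLeft A * lowerLeft C - lowerLeft (A * B) * lowerLeft (B * C)
      + lowerLeft (A * (B * C)) * lowerLeft B = 0 := by
  have hd := my_det B
  simp only [lowerLeft, Matrix.SpecialLinearGroup.coe_mul, Matrix.mul_apply,
    Fin.sum_univ_two] at *
  linear_combination (-((A : Matrix (Fin 2) (Fin 2) ℝ) 1 0 *
    (C : Matrix (Fin 2) (Fin 2) ℝ) 1 0)) * hd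

lemma my_tri (x : ℝ) : (x < 0 ∧ Real.sign x = -1) ∨ (x = 0 ∧ Real.sign x = 0) ∨
    (0 < x ∧ Real.sign x = 1) := by
  rcases lt_trichotomy x 0 with hx|hx|hx
  · exact Or.inl ⟨hx, Real.sign_of_neg hx⟩
  · exact Or.inr (Or.inl ⟨hx, by rw [hx, Real.sign_zero]⟩)
  · exact Or.inr (Or.inr ⟨hx, Real.sign_of_pos hx⟩)

set_option maxHeartbeats 0 in
lemma key (p q r s t u : ℝ)
    (h : p * u - q * t + r * s = 0)
    (h1 : p = 0 → q = 0 → s = 0) (h2 : p = 0 → s = 0 → q = 0) (h3 : q = 0 → s = 0 → p = 0)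
    (h4 : p = 0 → r = 0 → t = 0) (h5 : p = 0 → t = 0 → r = 0) (h6 : r = 0 → t = 0 → p = 0)
    (h7 : q = 0 → r = 0 → u = 0) (h8 : q = 0 → u = 0 → r = 0) (h9 : r = 0 → u = 0 → q = 0)
    (h10 : s = 0 → t = 0 → u = 0) (h11 : s = 0 → u = 0 → t = 0) (h12 : t = 0 → u = 0 → s = 0) :
    -Real.sign (s * u * t) - -Real.sign (q * u * r) + -Real.sign (p * t * r)
      - -Real.sign (p * s * q) = 0 := by
  simp only [my_sign_mul]
  rcases my_tri p with ⟨hp,sp⟩|⟨hp,sp⟩|⟨hp,sp⟩ <;>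
  rcases my_tri q with ⟨hq,sq⟩|⟨hq,sq⟩|⟨hq,sq⟩ <;>
  rcases my_tri r with ⟨hr,sr⟩|⟨hr,sr⟩|⟨hr,sr⟩ <;>
  rcases my_tri s with ⟨hs,hss⟩|⟨hs,hss⟩|⟨hs,hss⟩ <;>
  rcases my_tri t with ⟨ht,st⟩|⟨ht,st⟩|⟨ht,st⟩ <;>
  rcases my_tri u with ⟨hu,su⟩|⟨hu,su⟩|⟨hu,su⟩ <;>
  rw [sp, sq, sr, hss, st, su] <;>
  first
    | (norm_num; done)
    | (exfalso; first
        | exact absurd (h1 hp hq) (ne_of_lt hs)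
        | exact absurd (h1 hp hq) (ne_of_gt hs)
        | exact absurd (h2 hp hs) (ne_of_lt hq)
        | exact absurd (h2 hp hs) (ne_of_gt hq)
        | exact absurd (h3 hq hs) (ne_of_lt hp)
        | exact absurd (h3 hq hs) (ne_of_gt hp)
        | exact absurd (h4 hp hr) (ne_of_lt ht)
        | exact absurd (h4 hp hr) (ne_of_gt ht)
        | exact absurd (h5 hp ht) (ne_of_lt hr)
        | exact absurd (h5 hp ht) (ne_of_gt hr)
        | exact absurd (h6 hr ht) (ne_of_lt hp)
        | exact absurd (h6 hr ht) (ne_of_gt hp)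
        | exact absurd (h7 hq hr) (ne_of_lt hu)
        | exact absurd (h7 hq hr) (ne_of_gt hu)
        | exact absurd (h8 hq hu) (ne_of_lt hr)
        | exact absurd (h8 hq hu) (ne_of_gt hr)
        | exact absurd (h9 hr hu) (ne_of_lt hq)
        | exact absurd (h9 hr hu) (ne_of_gt hq)
        | exact absurd (h10 hs ht) (ne_of_lt hu)
        | exact absurd (h10 hs ht) (ne_of_gt hu)
        | exact absurd (h11 hs hu) (ne_of_lt ht)
        | exact absurd (h11 hs hu) (ne_of_gt ht)
        | exact absurd (h12 ht hu) (ne_of_lt hs)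
        | exact absurd (h12 ht hu) (ne_of_gt hs)
        | (subst_vars; nlinarith [h]))

/-- The area cocycle `aire(M, N) = −sgn(c(M)·c(N)·c(M·N))` on `SL(2, ℝ)`. -/
noncomputable def aire (M N : Matrix.SpecialLinearGroup (Fin 2) ℝ) : ℝ :=
  -Real.sign (lowerLeft M * lowerLeft N * lowerLeft (M * N))

/-- `aire` is a 2-cocycle on `SL(2, ℝ)` with values in `ℤ ⊂ ℝ`. -/
theorem stmt2 :
    (∀ A B C : Matrix.SpecialLinearGroup (Fin 2) ℝ,
      aire B C - aire (A * B) C + aire A (B * C) - aire A B = 0) ∧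
    (∀ M N : Matrix.SpecialLinearGroup (Fin 2) ℝ, ∃ k : ℤ, aire M N = (k : ℝ)) := by
  constructor
  · intro A B C
    simp only [aire]
    rw [mul_assoc A B C]
    exact key (lowerLeft A) (lowerLeft (A * B)) (lowerLeft (A * (B * C))) (lowerLeft B)
      (lowerLeft (B * C)) (lowerLeft C)
      (pluck A B C)
      (ll_t2 A B) (ll_t1 A B) (fun hq hs => ll_t3 A B hs hq)
      (ll_t2 A (B * C)) (ll_t1 A (B * C)) (fun hr ht => ll_t3 A (B * C) ht hr)
      (fun hq hr => ll_t2 (A * B) C hq (by rw [mul_assoc]; exact hr))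
      (fun hq hu => by rw [← mul_assoc]; exact ll_t1 (A * B) C hq hu)
      (fun hr hu => ll_t3 (A * B) C hu (by rw [mul_assoc]; exact hr))
      (ll_t2 B C) (ll_t1 B C) (fun ht hu => ll_t3 B C hu ht)
  · intro M N
    rcases my_tri (lowerLeft M * lowerLeft N * lowerLeft (M * N)) with ⟨_, h⟩|⟨_, h⟩|⟨_, h⟩
    · exact ⟨1, by rw [aire, h]; norm_num⟩
    · exact ⟨0, by rw [aire, h]; norm_num⟩
    · exact ⟨-1, by rw [aire, h]; norm_num⟩
end

section
/- For every complex number s with Re(s) > 0 and every σ ∈ {−1, 1}, the integral ∫₀^∞ t^{s−1} (σ − i t)² (1 + t²)^{−(s+1)} dt converges and equals −iσ · Γ((s+1)/2)² / Γ(s+1). -/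
open MeasureTheory Set

lemma cpow_pos_real {x : ℝ} (hx : 0 < x) (w : ℂ) : ((x:ℂ)) ^ w ≠ 0 := by
  rw [Ne, Complex.cpow_eq_zero_iff]
  simp [Complex.ofReal_ne_zero.mpr hx.ne']

lemma mul_cpow_pos {x y : ℝ} (hx : 0 < x) (hy : 0 < y) (w : ℂ) :
    ((x * y : ℝ) : ℂ) ^ w = (x:ℂ) ^ w * (y:ℂ) ^ w := by
  rw [Complex.ofReal_mul]; exact Complex.mul_cpow_ofReal_nonneg hx.le hy.le w

lemma inv_cpow_pos {y : ℝ} (hy : 0 < y) (w : ℂ) :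
    (((y⁻¹ : ℝ)) : ℂ) ^ w = (((y:ℝ):ℂ) ^ w)⁻¹ := by
  rw [Complex.ofReal_inv, Complex.inv_cpow]
  rw [Complex.arg_ofReal_of_nonneg hy.le]
  exact Real.pi_ne_zero.symm

lemma keylem {a b : ℂ} (ha : 0 < a.re) (hab : a.re < 2 * b.re) :
    IntegrableOn (fun t : ℝ => (t:ℂ) ^ (a - 1) * ((1:ℂ) + (t:ℂ)^2) ^ (-b)) (Ioi (0:ℝ)) ∧
    ∫ t in Ioi (0:ℝ), (t:ℂ) ^ (a - 1) * ((1:ℂ) + (t:ℂ)^2) ^ (-b)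
      = Complex.Gamma (a/2) * Complex.Gamma (b - a/2) / (2 * Complex.Gamma b) := by
  set u : ℂ := a / 2 with hu_def
  set v : ℂ := b - a / 2 with hv_def
  have hure : u.re = a.re / 2 := by
    simp [hu_def, Complex.div_re, Complex.normSq]
  have hu : 0 < u.re := by rw [hure]; linarith
  have hv : 0 < v.re := by
    have : v.re = b.re - a.re / 2 := by simp [hv_def, hure]
    rw [this]; linarith
  set f : ℝ → ℝ := fun t => t^2 / (1 + t^2) with hf_def
  set f' : ℝ → ℝ := fun t => 2 * t / (1 + t^2)^2 with hf'_def
  have hc : ∀ t : ℝ, (0:ℝ) < 1 + t^2 := fun t => by positivity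
  have h1 : ∀ t ∈ Ioi (0:ℝ), HasDerivWithinAt f (f' t) (Ioi 0) t := by
    intro t _
    have hne : (1 + t^2) ≠ 0 := (hc t).ne'
    have : HasDerivAt f ((2 * t^1 * (1 + t^2) - t^2 * (0 + 2*t^1)) / (1+t^2)^2) t :=
      (hasDerivAt_pow 2 t).div ((hasDerivAt_const t 1).add (hasDerivAt_pow 2 t)) hne
    convert this.hasDerivWithinAt using 1
    show 2 * t / (1 + t^2)^2 = _
    ring
    all_goals rfl
  have h2 : InjOn f (Ioi 0) := by
    intro x hx y hy hxy
    simp only [hf_def, div_eq_div_iff (hc x).ne' (hc y).ne'] at hxy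
    have hx0 : (0:ℝ) < x := hx
    have hy0 : (0:ℝ) < y := hy
    nlinarith [sq_nonneg (x - y), sq_nonneg (x + y)]
  have h3 : f '' (Ioi 0) = Ioo (0:ℝ) 1 := by
    ext x
    constructor
    · rintro ⟨t, ht, rfl⟩
      have ht0 : (0:ℝ) < t := ht
      constructor
      · positivity
      · rw [div_lt_one (hc t)]; linarith
    · rintro ⟨hx0, hx1⟩
      refine ⟨Real.sqrt (x / (1 - x)), ?_, ?_⟩
      · have : 0 < x / (1-x) := div_pos hx0 (by linarith)
        exact Real.sqrt_pos.mpr this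
      · have hxx : 0 ≤ x / (1-x) := le_of_lt (div_pos hx0 (by linarith))
        simp only [hf_def, Real.sq_sqrt hxx]
        have h1x : (1:ℝ) - x ≠ 0 := by linarith
        field_simp
        ring
  set g : ℝ → ℂ := fun y : ℝ => (y:ℂ) ^ (u - 1) * ((1:ℂ) - (y:ℂ)) ^ (v - 1) with hg_def
  have hpt : ∀ t ∈ Ioi (0:ℝ), |f' t| • g (f t)
      = 2 * ((t:ℂ) ^ (a - 1) * ((1:ℂ) + (t:ℂ)^2) ^ (-b)) := by
    intro t ht
    have ht0 : (0:ℝ) < t := ht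
    have hct : (0:ℝ) < 1 + t^2 := hc t
    have habs : |f' t| = 2 * t / (1 + t^2)^2 := by
      rw [hf'_def]; exact abs_of_pos (by positivity)
    have hfv : f t = (t * t) * (1 + t^2)⁻¹ := by rw [hf_def]; ring
    have h1f : (1:ℝ) - f t = (1 + t^2)⁻¹ := by rw [hf_def]; field_simp; ring
    have e1 : ((f t : ℝ) : ℂ) ^ (u - 1)
        = (t:ℂ) ^ (u-1) * (t:ℂ) ^ (u-1) * ((((1+t^2:ℝ)):ℂ) ^ (u-1))⁻¹ := by
      rw [hfv, mul_cpow_pos (by positivity) (by positivity),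
        mul_cpow_pos ht0 ht0, inv_cpow_pos hct]
    have e2 : ((1:ℂ) - ((f t : ℝ):ℂ)) ^ (v - 1) = ((((1+t^2:ℝ)):ℂ) ^ (v-1))⁻¹ := by
      have : (1:ℂ) - ((f t : ℝ):ℂ) = (((1:ℝ) - f t : ℝ) : ℂ) := by push_cast; ring
      rw [this, h1f, inv_cpow_pos hct]
    have e3 : (t:ℂ) ^ (a - 1) = (t:ℂ) ^ (u-1) * (t:ℂ) ^ (u-1) * (t:ℂ) := by
      have hane : a - 1 = (u - 1) + ((u - 1) + 1) := by rw [hu_def]; ring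
      rw [hane, Complex.cpow_add _ _ (Complex.ofReal_ne_zero.mpr ht0.ne'),
        Complex.cpow_add _ _ (Complex.ofReal_ne_zero.mpr ht0.ne'), Complex.cpow_one]
      ring
    have hcC : ((1:ℂ) + (t:ℂ)^2) = (((1+t^2:ℝ)):ℂ) := by push_cast; ring
    have hcne : (((1+t^2:ℝ)):ℂ) ≠ 0 := Complex.ofReal_ne_zero.mpr hct.ne'
    have e4 : ((1:ℂ) + (t:ℂ)^2) ^ (-b)
        = (((((1+t^2:ℝ)):ℂ) ^ (u-1)) * ((((1+t^2:ℝ)):ℂ) ^ (v-1)) * (((1+t^2:ℝ)):ℂ)^(2:ℕ))⁻¹ := by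
      rw [hcC, Complex.cpow_neg]
      congr 1
      have hbe : b = (u - 1) + ((v - 1) + 2) := by rw [hu_def, hv_def]; ring
      rw [hbe, Complex.cpow_add _ _ hcne, Complex.cpow_add _ _ hcne]
      norm_num [Complex.cpow_natCast]
      ring
    have hT : (t:ℂ) ^ (u-1) ≠ 0 := cpow_pos_real ht0 _
    have hC1 : (((1+t^2:ℝ)):ℂ) ^ (u-1) ≠ 0 := cpow_pos_real hct _
    have hC2 : (((1+t^2:ℝ)):ℂ) ^ (v-1) ≠ 0 := cpow_pos_real hct _
    rw [hg_def]
    simp only [habs, Complex.real_smul, e1, e2, e3, e4]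
    push_cast
    rw [hcC]
    field_simp
  -- integrability
  have hbeta_int : IntegrableOn g (Ioo (0:ℝ) 1) := by
    have hbc := Complex.betaIntegral_convergent hu hv
    rw [intervalIntegrable_iff_integrableOn_Ioc_of_le zero_le_one] at hbc
    exact hbc.mono_set Ioo_subset_Ioc_self
  have hiff := integrableOn_image_iff_integrableOn_abs_deriv_smul measurableSet_Ioi h1 h2 g
  rw [h3] at hiff
  have hInt2 : IntegrableOn (fun t => |f' t| • g (f t)) (Ioi (0:ℝ)) := hiff.mp hbeta_int
  have hInt2' : IntegrableOn
      (fun t : ℝ => 2 * ((t:ℂ) ^ (a - 1) * ((1:ℂ) + (t:ℂ)^2) ^ (-b))) (Ioi (0:ℝ)) :=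
    hInt2.congr_fun hpt measurableSet_Ioi
  have hInt : IntegrableOn (fun t : ℝ => (t:ℂ) ^ (a - 1) * ((1:ℂ) + (t:ℂ)^2) ^ (-b))
      (Ioi (0:ℝ)) := by
    have h2' : IntegrableOn
        (fun t : ℝ => (2:ℂ)⁻¹ * (2 * ((t:ℂ) ^ (a - 1) * ((1:ℂ) + (t:ℂ)^2) ^ (-b))))
        (Ioi (0:ℝ)) := hInt2'.const_mul ((2:ℂ)⁻¹)
    refine h2'.congr_fun (fun t _ => ?_) measurableSet_Ioi
    beta_reduce
    rw [← mul_assoc, inv_mul_cancel₀ two_ne_zero, one_mul]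
  refine ⟨hInt, ?_⟩
  -- integral value
  have hIeq := integral_image_eq_integral_abs_deriv_smul measurableSet_Ioi h1 h2 g
  rw [h3] at hIeq
  have hIeq2 : ∫ t in Ioi (0:ℝ), |f' t| • g (f t)
      = 2 * ∫ t in Ioi (0:ℝ), (t:ℂ) ^ (a - 1) * ((1:ℂ) + (t:ℂ)^2) ^ (-b) := by
    rw [setIntegral_congr_fun measurableSet_Ioi hpt, MeasureTheory.integral_const_mul]
  have hbetaval : ∫ y in Ioo (0:ℝ) 1, g y = Complex.betaIntegral u v := by
    rw [Complex.betaIntegral, intervalIntegral.integral_of_le zero_le_one,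
      integral_Ioc_eq_integral_Ioo]
  have huv : u + v = b := by rw [hu_def, hv_def]; ring
  have hGb : Complex.Gamma b ≠ 0 := by
    refine Complex.Gamma_ne_zero_of_re_pos ?_
    have : 0 < b.re := by linarith
    exact this
  have hGG := Complex.Gamma_mul_Gamma_eq_betaIntegral hu hv
  rw [huv] at hGG
  have : (2:ℂ) * ∫ t in Ioi (0:ℝ), (t:ℂ) ^ (a - 1) * ((1:ℂ) + (t:ℂ)^2) ^ (-b)
      = Complex.Gamma u * Complex.Gamma v / Complex.Gamma b := by
    rw [← hIeq2, ← hIeq, hbetaval]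
    field_simp
    linear_combination (-1:ℂ) * hGG
  rw [hu_def, hv_def] at this ⊢
  field_simp at this ⊢
  linear_combination this

/-- for `Re s > 0` and `σ ∈ {−1, 1}`, the integral
`∫₀^∞ t^{s−1} (σ − i t)² (1 + t²)^{−(s+1)} dt` converges and equals
`−iσ · Γ((s+1)/2)² / Γ(s+1)`. -/
theorem stmt3 (s : ℂ) (hs : 0 < s.re) (σ : ℝ) (hσ : σ = 1 ∨ σ = -1) :
    IntegrableOn (fun t : ℝ => (t : ℂ) ^ (s - 1) * ((σ : ℂ) - Complex.I * (t : ℂ)) ^ 2 *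
      ((1 : ℂ) + (t : ℂ) ^ 2) ^ (-(s + 1))) (Ioi (0 : ℝ)) ∧
    ∫ t in Ioi (0 : ℝ), (t : ℂ) ^ (s - 1) * ((σ : ℂ) - Complex.I * (t : ℂ)) ^ 2 *
        ((1 : ℂ) + (t : ℂ) ^ 2) ^ (-(s + 1)) =
      -Complex.I * (σ : ℂ) * Complex.Gamma ((s + 1) / 2) ^ 2 / Complex.Gamma (s + 1) := by
  have hs1 : (0:ℝ) < (s+1).re := by simp [Complex.add_re]; linarith
  obtain ⟨hI1, hE1⟩ := keylem (a := s) (b := s+1) hs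
    (by simp only [Complex.add_re, Complex.one_re]; linarith)
  obtain ⟨hI2, hE2⟩ := keylem (a := s+1) (b := s+1) hs1
    (by simp only [Complex.add_re, Complex.one_re]; linarith)
  obtain ⟨hI3, hE3⟩ := keylem (a := s+2) (b := s+1)
    (by simp only [Complex.add_re, Complex.re_ofNat]; linarith)
    (by simp only [Complex.add_re, Complex.one_re, Complex.re_ofNat]; linarith)
  set c : ℂ := 2 * Complex.I * (σ:ℂ) with hc_def
  have hσ2 : ((σ:ℂ))^2 = 1 := by rcases hσ with h | h <;> subst h <;> norm_num
  have hpt : ∀ t ∈ Ioi (0:ℝ),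
      ((t:ℂ) ^ (s - 1) * ((1:ℂ) + (t:ℂ)^2) ^ (-(s+1))
        - c * ((t:ℂ) ^ (s + 1 - 1) * ((1:ℂ) + (t:ℂ)^2) ^ (-(s+1)))
        - (t:ℂ) ^ (s + 2 - 1) * ((1:ℂ) + (t:ℂ)^2) ^ (-(s+1)))
      = (t : ℂ) ^ (s - 1) * ((σ : ℂ) - Complex.I * (t : ℂ)) ^ 2 *
          ((1 : ℂ) + (t : ℂ) ^ 2) ^ (-(s + 1)) := by
    intro t ht
    have ht0 : (0:ℝ) < t := ht
    have htne : (t:ℂ) ≠ 0 := Complex.ofReal_ne_zero.mpr ht0.ne'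
    have e1 : (t:ℂ) ^ (s + 1 - 1) = (t:ℂ) ^ (s - 1) * (t:ℂ) := by
      have : s + 1 - 1 = (s - 1) + 1 := by ring
      rw [this, Complex.cpow_add _ _ htne, Complex.cpow_one]
    have e2 : (t:ℂ) ^ (s + 2 - 1) = (t:ℂ) ^ (s - 1) * (t:ℂ) * (t:ℂ) := by
      have : s + 2 - 1 = ((s - 1) + 1) + 1 := by ring
      rw [this, Complex.cpow_add _ _ htne, Complex.cpow_add _ _ htne, Complex.cpow_one]
    rw [e1, e2, hc_def]
    set T := (t:ℂ) ^ (s - 1)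
    set C := ((1:ℂ) + (t:ℂ)^2) ^ (-(s+1))
    linear_combination (-(T * C)) * hσ2 - (T * C * (t:ℂ)^2) * Complex.I_sq
  have hI2c : IntegrableOn
      (fun t : ℝ => c * ((t:ℂ) ^ (s + 1 - 1) * ((1:ℂ) + (t:ℂ)^2) ^ (-(s+1)))) (Ioi (0:ℝ)) :=
    hI2.const_mul c
  have hI12 : IntegrableOn
      (fun t : ℝ => (t:ℂ) ^ (s - 1) * ((1:ℂ) + (t:ℂ)^2) ^ (-(s+1))
        - c * ((t:ℂ) ^ (s + 1 - 1) * ((1:ℂ) + (t:ℂ)^2) ^ (-(s+1)))) (Ioi (0:ℝ)) :=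
    hI1.sub hI2c
  constructor
  · exact IntegrableOn.congr_fun (hI12.sub hI3) hpt measurableSet_Ioi
  · rw [← setIntegral_congr_fun measurableSet_Ioi hpt,
      integral_sub hI12 hI3, integral_sub hI1 hI2c, MeasureTheory.integral_const_mul,
      hE1, hE2, hE3]
    have e31 : (s+2)/2 = s + 1 - s/2 := by ring
    have e32 : s + 1 - (s+2)/2 = s/2 := by ring
    have e21 : s + 1 - (s+1)/2 = (s+1)/2 := by ring
    rw [e32, e31, e21]
    have hGne : Complex.Gamma (s+1) ≠ 0 := Complex.Gamma_ne_zero_of_re_pos hs1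
    rw [hc_def]
    field_simp
    ring
end

section
/- Let F be a totally real number field of degree n, K a quadratic extension field of F, I a nonzero ideal of O_F, and O_I := O_F + I·O_K the order of conductor I in K. Let V := {u ∈ O_I^× : N_{K/ℚ}(u) = 1}, V₁ := {u ∈ V : N_{K/F}(u) = 1}, and let Ṽ be the subgroup of V generated by V₁ and O_F^×. Then the index [V : Ṽ] is finite and divides 2^n. -/
open NumberField

attribute [local instance] FractionRing.liftAlgebra FractionRing.isScalarTower_liftAlgebra

private lemma card_quot_sq_dvd {G : Type*} [CommGroup G] (s : Finset G)
    (hs : Subgroup.closure (s : Set G) = ⊤) :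
    Nat.card (G ⧸ (powMonoidHom 2 : G →* G).range) ∣ 2 ^ s.card := by
  classical
  set H : Subgroup G := (powMonoidHom 2 : G →* G).range with hH
  have h2 : ∀ y : G ⧸ H, y ^ 2 = 1 := by
    intro y
    induction y using QuotientGroup.induction_on with
    | _ g =>
      rw [← QuotientGroup.mk_pow]
      exact (QuotientGroup.eq_one_iff _).mpr ⟨g, rfl⟩
  letI : Module (ZMod 2) (Additive (G ⧸ H)) := AddCommGroup.zmodModule (n := 2) (by
    intro x
    have := congrArg Additive.ofMul (h2 (Additive.toMul x))
    simpa using this)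
  set T : Finset (Additive (G ⧸ H)) :=
    s.image (fun g => Additive.ofMul (QuotientGroup.mk (s := H) g)) with hT
  have hspanT : Submodule.span (ZMod 2) (T : Set (Additive (G ⧸ H))) = ⊤ := by
    rw [Submodule.eq_top_iff']
    intro x
    obtain ⟨g, rfl⟩ : ∃ g : G, Additive.ofMul ((g : G ⧸ H)) = x :=
      ⟨(Additive.toMul x).out, by simp⟩
    have hg : g ∈ Subgroup.closure (s : Set G) := hs ▸ Subgroup.mem_top g
    refine Subgroup.closure_induction ?_ ?_ ?_ ?_ hg
    · intro a ha
      exact Submodule.subset_span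
        (Finset.mem_coe.mpr (Finset.mem_image_of_mem _ (Finset.mem_coe.mpr ha)))
    · simpa using Submodule.zero_mem _
    · intro a b _ _ ha hb
      have : Additive.ofMul ((↑(a * b) : G ⧸ H)) =
          Additive.ofMul ((a : G ⧸ H)) + Additive.ofMul ((b : G ⧸ H)) := by
        simp
      rw [this]; exact Submodule.add_mem _ ha hb
    · intro a _ ha
      have : Additive.ofMul ((↑(a⁻¹) : G ⧸ H)) = -Additive.ofMul ((a : G ⧸ H)) := by
        simp
      rw [this]; exact Submodule.neg_mem _ ha
  haveI : Module.Finite (ZMod 2) (Additive (G ⧸ H)) := ⟨⟨T, hspanT⟩⟩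
  haveI : Finite (Additive (G ⧸ H)) := Module.finite_of_finite (ZMod 2)
  letI : Fintype (Additive (G ⧸ H)) := Fintype.ofFinite _
  have hfr : Module.finrank (ZMod 2) (Additive (G ⧸ H)) ≤ s.card := by
    have h1 := finrank_span_finset_le_card (R := ZMod 2) T
    rw [Set.finrank, hspanT, finrank_top] at h1
    exact h1.trans Finset.card_image_le
  have hcard : Nat.card (G ⧸ H) = 2 ^ Module.finrank (ZMod 2) (Additive (G ⧸ H)) := by
    rw [Nat.card_congr (Additive.ofMul (α := G ⧸ H)), Nat.card_eq_fintype_card,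
      Module.card_eq_pow_finrank (K := ZMod 2), ZMod.card]
  rw [hcard]
  exact pow_dvd_pow 2 hfr

private lemma units_gen (F : Type*) [Field F] [NumberField F] :
    ∃ s : Finset (𝓞 F)ˣ, s.card ≤ NumberField.Units.rank F + 1 ∧
      Subgroup.closure (s : Set (𝓞 F)ˣ) = ⊤ := by
  classical
  obtain ⟨g, hg⟩ := IsCyclic.exists_generator (α := NumberField.Units.torsion F)
  refine ⟨insert (g : (𝓞 F)ˣ) (Finset.image (NumberField.Units.fundSystem F) Finset.univ),
    ?_, ?_⟩
  · refine (Finset.card_insert_le _ _).trans ?_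
    have := Finset.card_image_le (s := (Finset.univ : Finset (Fin (NumberField.Units.rank F))))
      (f := NumberField.Units.fundSystem F)
    simpa using Nat.add_le_add_right (by simpa using this) 1
  · rw [Subgroup.eq_top_iff']
    intro x
    obtain ⟨⟨ζ, e⟩, hx, -⟩ := NumberField.Units.exist_unique_eq_mul_prod F x
    rw [hx]
    refine mul_mem ?_ (Subgroup.prod_mem _ (fun i _ => Subgroup.zpow_mem _
      (Subgroup.subset_closure (by simp)) _))
    obtain ⟨k, hk⟩ := Subgroup.mem_zpowers_iff.mp (hg ζ)
    have : ((ζ : (𝓞 F)ˣ)) = ((g : (𝓞 F)ˣ)) ^ k := by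
      rw [← hk]; push_cast; rfl
    rw [this]
    exact Subgroup.zpow_mem _ (Subgroup.subset_closure (by simp)) _

/-- Let `F` be a totally real number field of degree `n`, `K/F` a quadratic
extension, `I` a nonzero ideal of `O_F` and `O_I = O_F + I·O_K` the order of conductor `I`
in `K`.  Let `V` be the group of units of `O_I` of norm `1` over `ℚ`, `V₁ ≤ V` the subgroup
of units of relative norm `1` over `F`, and `Ṽ = ⟨V₁, O_F^×⟩`.  Then the index `[V : Ṽ]`
is finite and divides `2^n`. -/
theorem stmt5 (n : ℕ) (F K : Type*) [Field F] [NumberField F] [Field K] [NumberField K]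
    [Algebra F K]
    (hdegF : Module.finrank ℚ F = n)
    (htr : ∀ φ : F →+* ℂ, ComplexEmbedding.IsReal φ)
    (hquad : Module.finrank F K = 2)
    (I : Ideal (𝓞 F)) (hI : I ≠ ⊥)
    -- `O` is the order `O_I = O_F + I·O_K`, as a subring of `O_K`
    (O : Subring (𝓞 K))
    (hO : (O : Set (𝓞 K)) = {x : 𝓞 K | ∃ a : 𝓞 F,
      ∃ m ∈ I.map (algebraMap (𝓞 F) (𝓞 K)), x = algebraMap (𝓞 F) (𝓞 K) a + m})
    -- `V` is the group of units of `O_I` of norm `1` over `ℚ`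
    (V : Subgroup Oˣ)
    (hV : (V : Set Oˣ) = {u : Oˣ |
      Algebra.norm ℚ (algebraMap (𝓞 K) K ((u : O) : 𝓞 K)) = 1})
    -- `V₁` is the subgroup of elements of relative norm `1` over `F`
    (V₁ : Subgroup Oˣ)
    (hV₁ : (V₁ : Set Oˣ) = {u : Oˣ |
      Algebra.norm F (algebraMap (𝓞 K) K ((u : O) : 𝓞 K)) = 1})
    -- `W` is the image of `O_F^×` in the units of `O_I`
    (W : Subgroup Oˣ)
    (hW : (W : Set Oˣ) = {u : Oˣ | ∃ ε : (𝓞 F)ˣ,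
      ((u : O) : 𝓞 K) = algebraMap (𝓞 F) (𝓞 K) (ε : 𝓞 F)}) :
    -- `Ṽ = V₁ ⊔ W` has finite index in `V`, dividing `2^n`
    (V₁ ⊔ W).relIndex V ≠ 0 ∧ (V₁ ⊔ W).relIndex V ∣ 2 ^ n := by
  classical
  have hn1 : 1 ≤ n := by
    rw [← hdegF]; exact Module.finrank_pos
  have hcplx : NumberField.InfinitePlace.nrComplexPlaces F = 0 := by
    rw [Fintype.card_eq_zero_iff]
    exact ⟨fun ⟨w, hw⟩ => (NumberField.InfinitePlace.isComplex_iff.mp hw) (htr w.embedding)⟩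
  have hreal : NumberField.InfinitePlace.nrRealPlaces F = n := by
    have := NumberField.InfinitePlace.card_add_two_mul_card_eq_rank (K := F)
    rw [hcplx, hdegF] at this; omega
  have hcardIP : Fintype.card (NumberField.InfinitePlace F) = n := by
    rw [NumberField.InfinitePlace.card_eq_nrRealPlaces_add_nrComplexPlaces, hreal, hcplx]; omega
  have hrank1 : NumberField.Units.rank F + 1 = n := by
    rw [NumberField.Units.rank, hcardIP]; omega
  -- instances needed for the integral norm
  haveI : IsIntegralClosure (𝓞 K) (𝓞 F) (FractionRing (𝓞 K)) :=
    IsIntegralClosure.of_isIntegrallyClosed _ _ _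
  haveI : IsLocalization (Algebra.algebraMapSubmonoid (𝓞 K) (nonZeroDivisors (𝓞 F))) (FractionRing (𝓞 K)) :=
    IsIntegralClosure.isLocalization _ (FractionRing (𝓞 F)) _ _
  haveI : FiniteDimensional (FractionRing (𝓞 F)) (FractionRing (𝓞 K)) :=
    Module.Finite.of_isLocalization (𝓞 F) (𝓞 K) (Rₚ := FractionRing (𝓞 F)) (Sₚ := FractionRing (𝓞 K)) (nonZeroDivisors (𝓞 F))
  set nrm : (𝓞 K) →* (𝓞 F) := Algebra.intNorm (𝓞 F) (𝓞 K) with hnrm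
  have hnrm_spec : ∀ x : 𝓞 K, algebraMap (𝓞 F) F (nrm x)
      = Algebra.norm F (algebraMap (𝓞 K) K x) := fun x =>
    Algebra.algebraMap_intNorm (A := 𝓞 F) (K := F) (L := K) (B := 𝓞 K) (x := x)
  set sq : Subgroup (𝓞 F)ˣ := (powMonoidHom 2 : (𝓞 F)ˣ →* (𝓞 F)ˣ).range with hsq
  set φ : Oˣ →* (𝓞 F)ˣ ⧸ sq :=
    (QuotientGroup.mk' sq).comp ((Units.map nrm).comp (Units.map (O.subtype.toMonoidHom)))
    with hφ
  have hOF : ∀ x : 𝓞 F, algebraMap (𝓞 F) (𝓞 K) x ∈ O := by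
    intro x
    have : algebraMap (𝓞 F) (𝓞 K) x ∈ (O : Set (𝓞 K)) := by
      rw [hO]
      exact ⟨x, 0, Ideal.zero_mem _, by rw [add_zero]⟩
    exact this
  set f : (𝓞 F) →+* O := (algebraMap (𝓞 F) (𝓞 K)).codRestrict O hOF with hf
  set e : (𝓞 F)ˣ →* Oˣ := Units.map f.toMonoidHom with he
  have hker : φ.ker ≤ V₁ ⊔ W := by
    intro u hu
    rw [MonoidHom.mem_ker, hφ, MonoidHom.comp_apply, MonoidHom.comp_apply,
      QuotientGroup.mk'_apply, QuotientGroup.eq_one_iff] at hu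
    obtain ⟨ε, hε⟩ := MonoidHom.mem_range.mp hu
    have hw : e ε ∈ W := by
      have hval : ((((e ε) : Oˣ) : O) : 𝓞 K) = algebraMap (𝓞 F) (𝓞 K) (ε : 𝓞 F) := rfl
      have hmem : e ε ∈ (W : Set Oˣ) := by rw [hW]; exact ⟨ε, hval⟩
      exact hmem
    have hv : u * (e ε)⁻¹ ∈ V₁ := by
      have hmem : u * (e ε)⁻¹ ∈ (V₁ : Set Oˣ) := by
        rw [hV₁]
        show Algebra.norm F (algebraMap (𝓞 K) K (((u * (e ε)⁻¹ : Oˣ) : O) : 𝓞 K)) = 1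
        have hAB : (((u * (e ε)⁻¹ : Oˣ) : O) : 𝓞 K) =
            (((u : Oˣ) : O) : 𝓞 K) * ((((e ε)⁻¹ : Oˣ) : O) : 𝓞 K) := by
          rw [Units.val_mul]; rfl
        set c : F := algebraMap (𝓞 F) F (ε : 𝓞 F) with hc
        have hnA : Algebra.norm F (algebraMap (𝓞 K) K (((u : Oˣ) : O) : 𝓞 K)) = c ^ 2 := by
          rw [← hnrm_spec]
          have hval : nrm (((u : Oˣ) : O) : 𝓞 K) = ((ε : 𝓞 F)) ^ 2 := by
            have := congrArg (fun t : (𝓞 F)ˣ => (t : 𝓞 F)) hε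
            simpa [powMonoidHom] using this.symm
          rw [hval, map_pow, hc]
        have hBval : ((((e ε) : Oˣ) : O) : 𝓞 K) = algebraMap (𝓞 F) (𝓞 K) (ε : 𝓞 F) := rfl
        have hnB : Algebra.norm F (algebraMap (𝓞 K) K ((((e ε) : Oˣ) : O) : 𝓞 K)) = c ^ 2 := by
          rw [hBval, ← IsScalarTower.algebraMap_apply,
            IsScalarTower.algebraMap_apply (𝓞 F) F K, Algebra.norm_algebraMap, hquad, hc]
        have hBB : ((((e ε) : Oˣ) : O) : 𝓞 K) * ((((e ε)⁻¹ : Oˣ) : O) : 𝓞 K) = 1 := by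
          rw [← MulMemClass.coe_mul, ← Units.val_mul]
          simp
        have hnBinv : Algebra.norm F (algebraMap (𝓞 K) K ((((e ε)⁻¹ : Oˣ) : O) : 𝓞 K))
            * c ^ 2 = 1 := by
          rw [← hnB, ← map_mul, ← map_mul, mul_comm, hBB]
          simp
        rw [hAB, map_mul, map_mul, hnA, mul_comm]
        exact hnBinv
      exact hmem
    have hu2 : u = (u * (e ε)⁻¹) * (e ε) := by group
    rw [hu2]
    exact mul_mem ((le_sup_left : V₁ ≤ V₁ ⊔ W) hv) ((le_sup_right : W ≤ V₁ ⊔ W) hw)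
  obtain ⟨s, hscard, hsgen⟩ := units_gen F
  have hQ : Nat.card ((𝓞 F)ˣ ⧸ sq) ∣ 2 ^ n := by
    refine (card_quot_sq_dvd s hsgen).trans (pow_dvd_pow 2 ?_)
    omega
  have hdvd : (V₁ ⊔ W).relIndex V ∣ 2 ^ n := by
    have h1 : (V₁ ⊔ W).relIndex V ∣ φ.ker.relIndex V :=
      Subgroup.relIndex_dvd_of_le_left V hker
    have h2 : φ.ker.relIndex V = Nat.card (V.map φ) := Subgroup.relIndex_ker (K := V) φ
    have h3 : Nat.card (V.map φ) ∣ Nat.card ((𝓞 F)ˣ ⧸ sq) :=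
      Subgroup.card_subgroup_dvd_card _
    exact h1.trans (h2 ▸ (h3.trans hQ))
  refine ⟨?_, hdvd⟩
  intro h0
  rw [h0] at hdvd
  exact (pow_ne_zero n (two_ne_zero)) (Nat.eq_zero_of_zero_dvd hdvd)
end

section
/- Let K be a number field with archimedean places v₁,…,v_t and let I be a nonzero ideal of O_K. For every a ∈ O_K, every unit ε ∈ O_K^×, and every s ∈ ℂ, one has L(εa, I, s) = s_{v₂}(ε)·s_{v₃}(ε)⋯s_{v_t}(ε) · L(a, I, s). -/
open NumberField
lemma real_sign_mul' (a b : ℝ) : Real.sign (a * b) = Real.sign a * Real.sign b := by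
  rcases lt_trichotomy a 0 with ha | ha | ha <;>
    rcases lt_trichotomy b 0 with hb | hb | hb
  · rw [Real.sign_of_pos (mul_pos_of_neg_of_neg ha hb), Real.sign_of_neg ha,
      Real.sign_of_neg hb]; ring
  · simp [hb, Real.sign_zero]
  · rw [Real.sign_of_neg (mul_neg_of_neg_of_pos ha hb), Real.sign_of_neg ha,
      Real.sign_of_pos hb]; ring
  · simp [ha, Real.sign_zero]
  · simp [ha, Real.sign_zero]
  · simp [ha, Real.sign_zero]
  · rw [Real.sign_of_neg (mul_neg_of_pos_of_neg ha hb), Real.sign_of_pos ha,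
      Real.sign_of_neg hb]; ring
  · simp [hb, Real.sign_zero]
  · rw [Real.sign_of_pos (mul_pos ha hb), Real.sign_of_pos ha, Real.sign_of_pos hb]; ring

/-- The sign `s_v(x)` attached to an archimedean place: `sign(v(x))` at a real place,
`1` at a complex place.  The place with index `j` is real iff `P j` holds, in which case
the fixed embedding `w j : K → ℂ` has real image and `v(x) = Re(w j x)`. -/
noncomputable def sgnAt {K : Type*} [Field K] {t : ℕ} (w : Fin t → (K →+* ℂ))
    (P : Fin t → Prop) [DecidablePred P] (j : Fin t) (x : K) : ℝ :=
  if P j then Real.sign ((w j x).re) else 1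

/-- The Hurwitz partial `L`-series `L(a, I, s)`, computed over a set `R` of orbit
representatives for `{x ∈ O_K ∖ {0} : x ≡ a mod I} / O_{K,+}^×(I)`:
`L(a,I,s) = N(I)^s · Σ_x s_{v₂}(x)⋯s_{v_t}(x)·|N_{K/ℚ}(x)|^{−s}`,
`i₁` being the index of the distinguished place `v₁`. -/
noncomputable def hurwitzL (K : Type*) [Field K] [NumberField K] {t : ℕ}
    (w : Fin t → (K →+* ℂ)) (P : Fin t → Prop) [DecidablePred P] (i₁ : Fin t)
    (I : Ideal (𝓞 K)) (s : ℂ) (R : Set (𝓞 K)) : ℂ :=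
  (Ideal.absNorm I : ℂ) ^ s *
    ∑' y : R, ((∏ j ∈ Finset.univ.erase i₁,
        sgnAt w P j (algebraMap (𝓞 K) K ((y : 𝓞 K)))) : ℂ) *
      (((|Algebra.norm ℚ (algebraMap (𝓞 K) K ((y : 𝓞 K)))| : ℚ) : ℝ) : ℂ) ^ (-s)

/-- `L(εa, I, s) = s_{v₂}(ε)⋯s_{v_t}(ε) · L(a, I, s)` for every unit `ε`. -/
theorem stmt11 (K : Type*) [Field K] [NumberField K] (t : ℕ)
    -- the archimedean places `v₁, …, v_t`, with their fixed embeddings `w j`;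
    -- the place `v_j` is real iff `P j`, and `v₁` has index `i₁`
    (w : Fin t → (K →+* ℂ)) (P : Fin t → Prop) [DecidablePred P] (i₁ : Fin t)
    (hreal : ∀ j, P j → ∀ x : K, (w j x).im = 0)
    (I : Ideal (𝓞 K)) (hI : I ≠ ⊥)
    (a : 𝓞 K) (ε : (𝓞 K)ˣ) (s : ℂ)
    -- `U`: the totally positive units of `O_K` congruent to `1` mod `I`
    (U : Set (𝓞 K)ˣ)
    (hU : U = {u : (𝓞 K)ˣ |
      (∀ φ : K →+* ℝ, 0 < φ (algebraMap (𝓞 K) K ((u : 𝓞 K)))) ∧ ((u : 𝓞 K) - 1 ∈ I)})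
    -- `Ra`: orbit representatives for `{x ≠ 0 : x ≡ a mod I} / U`
    (Ra : Set (𝓞 K)) (hRa0 : ∀ y ∈ Ra, y ≠ 0 ∧ y - a ∈ I)
    (hRa : ∀ x : 𝓞 K, x ≠ 0 → x - a ∈ I →
      ∃! y, y ∈ Ra ∧ ∃ u ∈ U, y = (u : 𝓞 K) * x)
    -- `Rε`: orbit representatives for `{x ≠ 0 : x ≡ εa mod I} / U`
    (Rε : Set (𝓞 K)) (hRε0 : ∀ y ∈ Rε, y ≠ 0 ∧ y - (ε : 𝓞 K) * a ∈ I)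
    (hRε : ∀ x : 𝓞 K, x ≠ 0 → x - (ε : 𝓞 K) * a ∈ I →
      ∃! y, y ∈ Rε ∧ ∃ u ∈ U, y = (u : 𝓞 K) * x) :
    hurwitzL K w P i₁ I s Rε =
      ((∏ j ∈ Finset.univ.erase i₁,
        sgnAt w P j (algebraMap (𝓞 K) K ((ε : 𝓞 K)))) : ℂ) * hurwitzL K w P i₁ I s Ra := by
  classical
  -- multiplicativity of sgnAt
  have sgn_mul : ∀ j (x y : K), sgnAt w P j (x * y) = sgnAt w P j x * sgnAt w P j y := by
    intro j x y
    unfold sgnAt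
    by_cases hj : P j
    · simp only [if_pos hj, map_mul, Complex.mul_re, hreal j hj, mul_zero, sub_zero]
      exact real_sign_mul' _ _
    · simp [hj]
  -- sgnAt of elements of U is 1
  have sgn_u : ∀ u ∈ U, ∀ j, sgnAt w P j (algebraMap (𝓞 K) K ((u : (𝓞 K)ˣ) : 𝓞 K)) = 1 := by
    intro u hu j
    unfold sgnAt
    by_cases hj : P j
    · rw [if_pos hj]
      set φ : K →+* ℝ :=
        { toFun := fun x => (w j x).re
          map_one' := by simp
          map_mul' := fun x y => by simp [Complex.mul_re, hreal j hj]
          map_zero' := by simp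
          map_add' := fun x y => by simp } with hφ
      have hpos : 0 < φ (algebraMap (𝓞 K) K ((u : (𝓞 K)ˣ) : 𝓞 K)) := by
        rw [hU] at hu; exact hu.1 φ
      exact Real.sign_of_pos hpos
    · rw [if_neg hj]
  -- absolute value of the norm of a unit is 1
  have normu : ∀ v : (𝓞 K)ˣ, |Algebra.norm ℚ (algebraMap (𝓞 K) K ((v : 𝓞 K)))| = 1 := by
    intro v
    have h := NumberField.isUnit_iff_norm.mp v.isUnit
    simpa [RingOfIntegers.coe_norm, RingOfIntegers.coe_eq_algebraMap] using h
  -- group-type closure facts about U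
  have hU1 : (1 : (𝓞 K)ˣ) ∈ U := by
    rw [hU]; exact ⟨fun φ => by simp, by simp⟩
  have hUinv : ∀ u ∈ U, u⁻¹ ∈ U := by
    intro u hu
    rw [hU] at hu ⊢
    constructor
    · intro φ
      have k1 := hu.1 φ
      have hinv : φ (algebraMap (𝓞 K) K ((u⁻¹ : (𝓞 K)ˣ) : 𝓞 K)) *
          φ (algebraMap (𝓞 K) K ((u : 𝓞 K))) = 1 := by
        rw [← map_mul, ← map_mul, Units.inv_mul, map_one, map_one]
      nlinarith
    · have hmu : ((u⁻¹ : (𝓞 K)ˣ) : 𝓞 K) * ((u : 𝓞 K)) = 1 := Units.inv_mul u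
      have e1 : ((u⁻¹ : (𝓞 K)ˣ) : 𝓞 K) - 1 =
          ((u⁻¹ : (𝓞 K)ˣ) : 𝓞 K) * (-(((u : 𝓞 K)) - 1)) := by
        linear_combination hmu
      rw [e1]
      exact I.mul_mem_left _ (I.neg_mem hu.2)
  have hUmul : ∀ u₁ ∈ U, ∀ u₂ ∈ U, u₁ * u₂ ∈ U := by
    intro u₁ h₁ u₂ h₂
    rw [hU] at h₁ h₂ ⊢
    constructor
    · intro φ
      have := mul_pos (h₁.1 φ) (h₂.1 φ)
      rw [← map_mul, ← map_mul] at this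
      simpa [Units.val_mul] using this
    · have e1 : ((u₁ * u₂ : (𝓞 K)ˣ) : 𝓞 K) - 1 =
          ((u₁ : 𝓞 K)) * (((u₂ : 𝓞 K)) - 1) + (((u₁ : 𝓞 K)) - 1) := by
        rw [Units.val_mul]; ring
      rw [e1]
      exact I.add_mem (I.mul_mem_left _ h₂.2) h₁.2
  -- the key existence statement defining the bijection Ra → Rε
  have key : ∀ y : Ra, ∃! z, z ∈ Rε ∧ ∃ u ∈ U, z = (u : 𝓞 K) * ((ε : 𝓞 K) * (y : 𝓞 K)) := by
    rintro ⟨y, hy⟩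
    obtain ⟨hy0, hyA⟩ := hRa0 y hy
    refine hRε ((ε : 𝓞 K) * y) (mul_ne_zero ε.ne_zero hy0) ?_
    have : (ε : 𝓞 K) * y - (ε : 𝓞 K) * a = (ε : 𝓞 K) * (y - a) := by ring
    rw [this]
    exact I.mul_mem_left _ hyA
  choose f hfRε hfu using fun y : Ra => (key y).exists
  -- f is a bijection from Ra to Rε
  set F : Ra → Rε := fun y => ⟨f y, hfRε y⟩ with hF
  have Finj : Function.Injective F := by
    rintro y₁ y₂ hEq
    have hfy : f y₁ = f y₂ := congrArg Subtype.val hEq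
    obtain ⟨u₁, hu₁, e₁⟩ := hfu y₁
    obtain ⟨u₂, hu₂, e₂⟩ := hfu y₂
    -- (y₁ : 𝓞 K) = (u₁⁻¹ * u₂ : unit) * y₂
    have hval : ((u₁⁻¹ * u₂ : (𝓞 K)ˣ) : 𝓞 K) * ((u₁ : 𝓞 K)) = ((u₂ : 𝓞 K)) := by
      rw [Units.val_mul]
      have : ((u₁⁻¹ : (𝓞 K)ˣ) : 𝓞 K) * ((u₁ : 𝓞 K)) = 1 := Units.inv_mul u₁
      linear_combination ((u₂ : 𝓞 K)) * this
    have heps : (ε : 𝓞 K) ≠ 0 := ε.ne_zero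
    have e3 : (ε : 𝓞 K) * ((u₁ : 𝓞 K) * (y₁ : 𝓞 K)) =
        (ε : 𝓞 K) * ((u₂ : 𝓞 K) * (y₂ : 𝓞 K)) := by
      have := e₁.symm.trans (hfy.trans e₂)
      linear_combination this
    have e4 : (u₁ : 𝓞 K) * (y₁ : 𝓞 K) = (u₂ : 𝓞 K) * (y₂ : 𝓞 K) :=
      mul_left_cancel₀ heps e3
    have hu1ne : ((u₁ : 𝓞 K)) ≠ 0 := u₁.ne_zero
    have e5 : (y₁ : 𝓞 K) = ((u₁⁻¹ * u₂ : (𝓞 K)ˣ) : 𝓞 K) * (y₂ : 𝓞 K) := by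
      apply mul_left_cancel₀ hu1ne
      calc (u₁ : 𝓞 K) * (y₁ : 𝓞 K) = (u₂ : 𝓞 K) * (y₂ : 𝓞 K) := e4
        _ = ((u₁⁻¹ * u₂ : (𝓞 K)ˣ) : 𝓞 K) * ((u₁ : 𝓞 K)) * (y₂ : 𝓞 K) := by rw [hval]
        _ = (u₁ : 𝓞 K) * (((u₁⁻¹ * u₂ : (𝓞 K)ˣ) : 𝓞 K) * (y₂ : 𝓞 K)) := by ring
    obtain ⟨hy20, hy2A⟩ := hRa0 _ y₂.2
    have huniq := hRa (y₂ : 𝓞 K) hy20 hy2A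
    have h1 : (y₁ : 𝓞 K) = (y₂ : 𝓞 K) := by
      have hA := huniq.unique
        ⟨y₁.2, u₁⁻¹ * u₂, hUmul _ (hUinv _ hu₁) _ hu₂, e5⟩
        ⟨y₂.2, 1, hU1, by simp⟩
      exact hA
    exact Subtype.ext h1
  have Fsurj : Function.Surjective F := by
    rintro ⟨z, hz⟩
    obtain ⟨hz0, hzA⟩ := hRε0 z hz
    set x : 𝓞 K := ((ε⁻¹ : (𝓞 K)ˣ) : 𝓞 K) * z with hx
    have hx0 : x ≠ 0 := mul_ne_zero (ε⁻¹).ne_zero hz0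
    have hxA : x - a ∈ I := by
      have hmu : ((ε⁻¹ : (𝓞 K)ˣ) : 𝓞 K) * ((ε : 𝓞 K)) = 1 := Units.inv_mul ε
      have e1 : x - a = ((ε⁻¹ : (𝓞 K)ˣ) : 𝓞 K) * (z - (ε : 𝓞 K) * a) := by
        rw [hx]; linear_combination a * hmu
      rw [e1]
      exact I.mul_mem_left _ hzA
    obtain ⟨y, ⟨hyRa, u, hu, hyu⟩, -⟩ := hRa x hx0 hxA
    refine ⟨⟨y, hyRa⟩, ?_⟩
    -- show F ⟨y,hyRa⟩ = ⟨z,hz⟩, i.e. f ⟨y,hyRa⟩ = z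
    have hz_eq : z = ((u⁻¹ : (𝓞 K)ˣ) : 𝓞 K) * ((ε : 𝓞 K) * y) := by
      have hmu : ((u⁻¹ : (𝓞 K)ˣ) : 𝓞 K) * ((u : 𝓞 K)) = 1 := Units.inv_mul u
      have hme : ((ε⁻¹ : (𝓞 K)ˣ) : 𝓞 K) * ((ε : 𝓞 K)) = 1 := Units.inv_mul ε
      have hyu' : y = (u : 𝓞 K) * (((ε⁻¹ : (𝓞 K)ˣ) : 𝓞 K) * z) := hyu
      -- z = u⁻¹ * ε * y
      have : ((u⁻¹ : (𝓞 K)ˣ) : 𝓞 K) * ((ε : 𝓞 K) * y) =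
          (((u⁻¹ : (𝓞 K)ˣ) : 𝓞 K) * ((u : 𝓞 K))) *
            ((((ε⁻¹ : (𝓞 K)ˣ) : 𝓞 K) * ((ε : 𝓞 K))) * z) := by
        rw [hyu']; ring
      rw [this, hmu, hme]; ring
    have hfy := (key ⟨y, hyRa⟩).unique
      ⟨hfRε ⟨y, hyRa⟩, hfu ⟨y, hyRa⟩⟩
      ⟨hz, u⁻¹, hUinv _ hu, hz_eq⟩
    exact Subtype.ext hfy
  -- the term function
  set T : 𝓞 K → ℂ := fun x =>
    ((∏ j ∈ Finset.univ.erase i₁, sgnAt w P j (algebraMap (𝓞 K) K x)) : ℂ) *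
      (((|Algebra.norm ℚ (algebraMap (𝓞 K) K x)| : ℚ) : ℝ) : ℂ) ^ (-s) with hT
  set C : ℂ := ((∏ j ∈ Finset.univ.erase i₁,
      sgnAt w P j (algebraMap (𝓞 K) K ((ε : 𝓞 K)))) : ℂ) with hC
  have hterm : ∀ y : Ra, T (f y) = C * T (y : 𝓞 K) := by
    intro y
    obtain ⟨u, hu, e⟩ := hfu y
    rw [e]
    -- sign part
    have hs : (∏ j ∈ Finset.univ.erase i₁,
        sgnAt w P j (algebraMap (𝓞 K) K ((u : 𝓞 K) * ((ε : 𝓞 K) * (y : 𝓞 K))))) =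
        (∏ j ∈ Finset.univ.erase i₁, sgnAt w P j (algebraMap (𝓞 K) K ((ε : 𝓞 K)))) *
        (∏ j ∈ Finset.univ.erase i₁, sgnAt w P j (algebraMap (𝓞 K) K ((y : 𝓞 K)))) := by
      rw [← Finset.prod_mul_distrib]
      apply Finset.prod_congr rfl
      intro j hj
      rw [map_mul, map_mul, sgn_mul, sgn_mul, sgn_u u hu j, one_mul]
    -- norm part
    have hn : |Algebra.norm ℚ (algebraMap (𝓞 K) K ((u : 𝓞 K) * ((ε : 𝓞 K) * (y : 𝓞 K))))| =
        |Algebra.norm ℚ (algebraMap (𝓞 K) K ((y : 𝓞 K)))| := by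
      rw [map_mul, map_mul, map_mul, map_mul, abs_mul, abs_mul, normu u, normu ε,
        one_mul, one_mul]
    have hs' : (∏ j ∈ Finset.univ.erase i₁,
        ((sgnAt w P j (algebraMap (𝓞 K) K ((u : 𝓞 K) * ((ε : 𝓞 K) * (y : 𝓞 K)))) : ℂ))) =
        (∏ j ∈ Finset.univ.erase i₁,
          ((sgnAt w P j (algebraMap (𝓞 K) K ((ε : 𝓞 K)))) : ℂ)) *
        (∏ j ∈ Finset.univ.erase i₁,
          ((sgnAt w P j (algebraMap (𝓞 K) K ((y : 𝓞 K)))) : ℂ)) := by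
      exact_mod_cast congrArg (fun r : ℝ => (r : ℂ)) hs
    simp only [hT]
    rw [hs', hn, hC]
    ring
  -- put everything together
  have htsum : (∑' z : Rε, T (z : 𝓞 K)) = C * ∑' y : Ra, T (y : 𝓞 K) := by
    have hbij : Function.Bijective F := ⟨Finj, Fsurj⟩
    rw [← (Equiv.ofBijective F hbij).tsum_eq (fun z : Rε => T (z : 𝓞 K))]
    have : ∀ y : Ra, T ((F y : Rε) : 𝓞 K) = C * T (y : 𝓞 K) := fun y => hterm y
    calc (∑' y : Ra, T ((F y : Rε) : 𝓞 K)) = ∑' y : Ra, C * T (y : 𝓞 K) := by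
          exact tsum_congr this
      _ = C * ∑' y : Ra, T (y : 𝓞 K) := tsum_mul_left
  rw [hurwitzL, hurwitzL]
  show (Ideal.absNorm I : ℂ) ^ s * (∑' z : Rε, T (z : 𝓞 K)) =
    C * ((Ideal.absNorm I : ℂ) ^ s * ∑' y : Ra, T (y : 𝓞 K))
  rw [htsum]; ring
end

section
/- Let F be a totally real number field of degree n > 1 with real embeddings v₁,…,v_n, and let δ be a totally positive generator of the different ideal of F/ℚ. Then for every z = (z₁,…,z_n) ∈ ℍⁿ, the family indexed by the totally positive elements μ of O_F with value σ₁(μ) · exp(2πi · Σ_{j=1}^n v_j(μ)·z_j / v_j(δ)) is (absolutely) summable; i.e. the Fourier series defining the weight 2 Hilbert Eisenstein series E₂ converges absolutely on ℍⁿ. -/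
open NumberField

set_option maxHeartbeats 1000000
set_option synthInstance.maxHeartbeats 1000000

/-- `σ₁(μ) = Σ_{(ν) ∣ (μ)} |N_{F/ℚ}(ν)|`, the sum running over the nonzero principal
ideals of `O_F` dividing `(μ)`. -/
noncomputable def sigmaOne (F : Type*) [Field F] [NumberField F] (μ : 𝓞 F) : ℝ :=
  ∑ᶠ J ∈ {J : Ideal (𝓞 F) | J ≠ ⊥ ∧ J.IsPrincipal ∧ J ∣ Ideal.span {μ}},
    (Ideal.absNorm J : ℝ)

lemma sigmaOne_aux (F : Type*) [Field F] [NumberField F] (μ : 𝓞 F) (hμ : μ ≠ 0) :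
    ∃ (hfin : {J : Ideal (𝓞 F) | J ≠ ⊥ ∧ J.IsPrincipal ∧ J ∣ Ideal.span {μ}}.Finite),
      hfin.toFinset.card ≤ Ideal.absNorm (Ideal.span {μ}) := by
  classical
  set I : Ideal (𝓞 F) := Ideal.span {μ} with hI
  have hIbot : I ≠ ⊥ := by simpa [hI, Ideal.span_singleton_eq_bot] using hμ
  letI : Fintype (𝓞 F ⧸ I) := @Fintype.ofFinite _ (Ideal.finiteQuotientOfFreeOfNeBot I hIbot)
  set q := Ideal.Quotient.mk I with hq
  set D := {J : Ideal (𝓞 F) | J ≠ ⊥ ∧ J.IsPrincipal ∧ J ∣ I} with hD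
  have hcomap : ∀ J ∈ D, Ideal.comap q (Ideal.map q J) = J := by
    intro J hJ
    rw [Ideal.comap_map_of_surjective q Ideal.Quotient.mk_surjective,
      ← RingHom.ker_eq_comap_bot, hq, Ideal.mk_ker,
      sup_eq_left.mpr (Ideal.le_of_dvd hJ.2.2)]
  have hprin : ∀ J ∈ D, (Ideal.map q J).IsPrincipal := by
    rintro J ⟨-, ⟨ν, rfl⟩, -⟩
    refine ⟨q ν, ?_⟩
    rw [Ideal.submodule_span_eq, Ideal.map_span, Set.image_singleton]
  set g : Ideal (𝓞 F) → 𝓞 F ⧸ I := fun J =>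
    if h : (Ideal.map q J).IsPrincipal then @Submodule.IsPrincipal.generator _ _ _ _ _ _ h else 0
    with hg
  have hginj : Set.InjOn g D := by
    intro J hJ J' hJ' h
    rw [← hcomap J hJ, ← hcomap J' hJ']
    congr 1
    haveI h1 := hprin J hJ
    haveI h2 := hprin J' hJ'
    rw [← Ideal.span_singleton_generator (Ideal.map q J),
      ← Ideal.span_singleton_generator (Ideal.map q J')]
    simp only [hg, dif_pos h1, dif_pos h2] at h
    rw [h]
  have hfin : D.Finite := Set.Finite.of_finite_image (Set.toFinite _) hginj
  refine ⟨hfin, ?_⟩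
  have h1 : hfin.toFinset.card ≤ Fintype.card (𝓞 F ⧸ I) := by
    apply Finset.card_le_card_of_injOn g (fun J _ => Finset.mem_univ _)
    intro a ha b hb hab
    exact hginj (hfin.mem_toFinset.mp ha) (hfin.mem_toFinset.mp hb) hab
  rwa [Ideal.absNorm_apply, Submodule.cardQuot_apply, Nat.card_eq_fintype_card]

lemma sigmaOne_nonneg_le (F : Type*) [Field F] [NumberField F] (μ : 𝓞 F) (hμ : μ ≠ 0) :
    0 ≤ sigmaOne F μ ∧ sigmaOne F μ ≤ (Ideal.absNorm (Ideal.span {μ}) : ℝ) ^ 2 := by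
  obtain ⟨hfin, hcard⟩ := sigmaOne_aux F μ hμ
  have heq : sigmaOne F μ = ∑ J ∈ hfin.toFinset, (Ideal.absNorm J : ℝ) :=
    finsum_mem_eq_finite_toFinset_sum _ hfin
  have hN0 : Ideal.absNorm (Ideal.span {μ}) ≠ 0 := by
    rw [Ne, Ideal.absNorm_eq_zero_iff, Ideal.span_singleton_eq_bot]; exact hμ
  constructor
  · rw [heq]
    exact Finset.sum_nonneg fun J _ => Nat.cast_nonneg _
  · rw [heq]
    have hterm : ∀ J ∈ hfin.toFinset,
        (Ideal.absNorm J : ℝ) ≤ (Ideal.absNorm (Ideal.span {μ}) : ℝ) := by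
      intro J hJ
      have hdvd := (hfin.mem_toFinset.mp hJ).2.2
      exact_mod_cast Nat.cast_le.mpr (Nat.le_of_dvd (Nat.pos_of_ne_zero hN0)
        (Ideal.absNorm_dvd_absNorm_of_le (Ideal.le_of_dvd hdvd)))
    calc ∑ J ∈ hfin.toFinset, (Ideal.absNorm J : ℝ)
        ≤ hfin.toFinset.card • (Ideal.absNorm (Ideal.span {μ}) : ℝ) :=
          Finset.sum_le_card_nsmul _ _ _ hterm
      _ = (hfin.toFinset.card : ℝ) * (Ideal.absNorm (Ideal.span {μ}) : ℝ) := nsmul_eq_mul _ _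
      _ ≤ (Ideal.absNorm (Ideal.span {μ}) : ℝ) * (Ideal.absNorm (Ideal.span {μ}) : ℝ) :=
          mul_le_mul_of_nonneg_right (by exact_mod_cast hcard) (Nat.cast_nonneg _)
      _ = (Ideal.absNorm (Ideal.span {μ}) : ℝ) ^ 2 := (sq _).symm

lemma norm_eq_prod_v {n : ℕ} {F : Type*} [Field F] [NumberField F]
    (hdeg : Module.finrank ℚ F = n) (v : Fin n → (F →+* ℝ)) (hv : Function.Injective v)
    (x : F) : ((Algebra.norm ℚ x : ℝ)) = ∏ j, v j x := by
  classical
  let e : Fin n → (F →ₐ[ℚ] ℂ) := fun j => (Complex.ofRealHom.comp (v j)).toRatAlgHom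
  have hex : ∀ j y, e j y = ((v j y : ℝ) : ℂ) := fun j y => rfl
  have he : Function.Injective e := by
    intro j k h
    apply hv
    ext y
    have := DFunLike.congr_fun h y
    rw [hex, hex] at this
    exact_mod_cast this
  have hbij : Function.Bijective e := by
    rw [Fintype.bijective_iff_injective_and_card]
    refine ⟨he, ?_⟩
    rw [Fintype.card_fin, AlgHom.card, hdeg]
  have h1 := Algebra.norm_eq_prod_embeddings ℚ (E := ℂ) x
  rw [← Fintype.prod_bijective e hbij (fun j => e j x) (fun σ => σ x) (fun j => rfl)] at h1
  apply Complex.ofReal_injective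
  rw [Complex.ofReal_prod]
  rw [show ((((Algebra.norm ℚ) x : ℚ) : ℝ) : ℂ) = algebraMap ℚ ℂ ((Algebra.norm ℚ) x) by
    push_cast; norm_num]
  exact h1

lemma summable_pi_fin : ∀ (m : ℕ) (g : Fin m → ℕ → ℝ), (∀ j, Summable (g j)) →
    (∀ j a, 0 ≤ g j a) → Summable (fun a : Fin m → ℕ => ∏ j, g j (a j))
  | 0, g, _, _ => by
    have : (fun a : Fin 0 → ℕ => ∏ j, g j (a j)) = fun _ => 1 := by
      funext a; simp
    rw [this]
    exact .of_finite
  | (m+1), g, hg, hg0 => by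
    have ih := summable_pi_fin m (fun j => g j.succ) (fun j => hg _) (fun j => hg0 _)
    have h := (hg 0).mul_of_nonneg ih (fun a => hg0 0 a)
      (fun b => Finset.prod_nonneg fun j _ => hg0 _ _)
    have := ((Fin.consEquiv (fun _ : Fin (m+1) => ℕ)).symm.summable_iff
      (f := fun p : ℕ × (Fin m → ℕ) => g 0 p.1 * ∏ j, g j.succ (p.2 j))).mpr h
    refine this.congr fun a => ?_
    simp only [Function.comp_apply]
    rw [Fin.prod_univ_succ]
    simp [Fin.consEquiv]
    left
    rfl

/-- for `F` totally real of degree `n > 1` with real embeddings `v j`, `δ` a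
totally positive generator of the different of `F/ℚ`, and `z ∈ ℍⁿ`, the family indexed by
the totally positive `μ ∈ O_F` with value `σ₁(μ)·exp(2πi·Σ_j v_j(μ)·z_j / v_j(δ))` is
absolutely summable. -/
theorem stmt12 (n : ℕ) (hn : 1 < n) (F : Type*) [Field F] [NumberField F]
    (hdeg : Module.finrank ℚ F = n)
    (v : Fin n → (F →+* ℝ)) (hv : Function.Injective v)
    (δ : 𝓞 F) (hδpos : ∀ j, 0 < v j (algebraMap (𝓞 F) F δ))
    (hδ : Ideal.span {δ} = differentIdeal ℤ (𝓞 F))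
    (z : Fin n → ℂ) (hz : ∀ j, 0 < (z j).im) :
    Summable (fun μ : {μ : 𝓞 F // ∀ j, 0 < v j (algebraMap (𝓞 F) F μ)} =>
      ‖(sigmaOne F (μ : 𝓞 F) : ℂ) * Complex.exp (2 * Real.pi * Complex.I *
        ∑ j, ((v j (algebraMap (𝓞 F) F (μ : 𝓞 F)) / v j (algebraMap (𝓞 F) F δ) : ℝ) : ℂ)
          * z j)‖) := by
  classical
  have hn0 : 0 < n := by omega
  haveI : Nonempty (Fin n) := ⟨⟨0, hn0⟩⟩
  have hπ := Real.pi_pos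
  set c : Fin n → ℝ := fun j => 2 * Real.pi * (z j).im / v j (algebraMap (𝓞 F) F δ) with hc
  have hcpos : ∀ j, 0 < c j := fun j => div_pos (by have := hz j; positivity) (hδpos j)
  -- the key integrality fact: products of the embeddings of a nonzero integer have abs ≥ 1
  have key : ∀ d : 𝓞 F, d ≠ 0 → 1 ≤ |∏ j, v j (algebraMap (𝓞 F) F d)| := by
    intro d hd
    have hd' : algebraMap (𝓞 F) F d ≠ 0 :=
      (map_ne_zero_iff _ NumberField.RingOfIntegers.coe_injective).mpr hd
    have hint : Algebra.norm ℚ (algebraMap (𝓞 F) F d) = ((Algebra.norm ℤ d : ℤ) : ℚ) :=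
      (Algebra.coe_norm_int d).symm
    have hd2 : Algebra.norm ℤ d ≠ 0 := by
      intro h
      have hnz : Algebra.norm ℚ (algebraMap (𝓞 F) F d) ≠ 0 :=
        Algebra.norm_ne_zero_iff.mpr hd'
      rw [hint, h] at hnz
      simp at hnz
    rw [← norm_eq_prod_v hdeg v hv, hint]
    push_cast
    exact_mod_cast Int.one_le_abs hd2
  have hμne : ∀ μ : {μ : 𝓞 F // ∀ j, 0 < v j (algebraMap (𝓞 F) F μ)}, (μ : 𝓞 F) ≠ 0 := by
    intro μ h
    have h2 := μ.2 ⟨0, hn0⟩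
    rw [h] at h2
    simp at h2
  have hprod : ∀ μ : {μ : 𝓞 F // ∀ j, 0 < v j (algebraMap (𝓞 F) F μ)},
      ((Ideal.absNorm (Ideal.span {(μ : 𝓞 F)}) : ℝ))
        = ∏ j, v j (algebraMap (𝓞 F) F (μ : 𝓞 F)) := by
    intro μ
    rw [Ideal.absNorm_span_singleton, Nat.cast_natAbs, Int.cast_abs]
    rw [show ((Algebra.norm ℤ (μ : 𝓞 F) : ℤ) : ℝ)
        = ((Algebra.norm ℚ (algebraMap (𝓞 F) F (μ : 𝓞 F)) : ℚ) : ℝ) by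
      rw [← Algebra.coe_norm_int]; push_cast; ring]
    rw [norm_eq_prod_v hdeg v hv]
    exact abs_of_pos (Finset.prod_pos fun j _ => μ.2 j)
  set Ψ : {μ : 𝓞 F // ∀ j, 0 < v j (algebraMap (𝓞 F) F μ)} → (Fin n → ℕ) :=
    fun μ j => ⌊v j (algebraMap (𝓞 F) F (μ : 𝓞 F))⌋₊ with hΨ
  set G : (Fin n → ℕ) → ℝ :=
    fun a => ∏ j, (((a j : ℝ) + 1) ^ 2 * Real.exp (-c j * (a j))) with hG
  have hGsum : Summable G := by
    apply summable_pi_fin n (fun j a => ((a : ℝ) + 1) ^ 2 * Real.exp (-c j * a))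
    · intro j
      have hrlt : ‖Real.exp (-c j)‖ < 1 := by
        rw [Real.norm_eq_abs, abs_of_pos (Real.exp_pos _)]
        exact Real.exp_lt_one_iff.mpr (by linarith [hcpos j])
      have s1 := summable_pow_mul_geometric_of_norm_lt_one 2 hrlt
      have s2 := summable_pow_mul_geometric_of_norm_lt_one 1 hrlt
      have s3 := summable_geometric_of_norm_lt_one hrlt
      refine ((s1.add (s2.mul_left 2)).add s3).congr fun a => ?_
      rw [show -c j * ((a : ℕ) : ℝ) = ((a : ℕ) : ℝ) * (-c j) from by ring, Real.exp_nat_mul]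
      ring
    · intro j a
      positivity
  have hΨinj : Function.Injective Ψ := by
    intro μ μ' h
    by_contra hne
    have hd : (μ : 𝓞 F) - (μ' : 𝓞 F) ≠ 0 :=
      sub_ne_zero.mpr fun hh => hne (Subtype.ext hh)
    have h1 := key _ hd
    simp only [map_sub] at h1
    have h2 : ∀ j, |v j (algebraMap (𝓞 F) F (μ : 𝓞 F))
        - v j (algebraMap (𝓞 F) F (μ' : 𝓞 F))| < 1 := by
      intro j
      have hj := congrFun h j
      simp only [hΨ] at hj
      have hx0 : (0:ℝ) ≤ v j (algebraMap (𝓞 F) F (μ : 𝓞 F)) := (μ.2 j).le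
      have hx0' : (0:ℝ) ≤ v j (algebraMap (𝓞 F) F (μ' : 𝓞 F)) := (μ'.2 j).le
      rw [abs_sub_lt_iff]
      constructor
      · have l1 := Nat.lt_floor_add_one (v j (algebraMap (𝓞 F) F (μ : 𝓞 F)))
        have l2 := Nat.floor_le hx0'
        rw [hj] at l1
        linarith
      · have l1 := Nat.lt_floor_add_one (v j (algebraMap (𝓞 F) F (μ' : 𝓞 F)))
        have l2 := Nat.floor_le hx0
        rw [← hj] at l1
        linarith
    by_cases hzero : ∃ j, v j (algebraMap (𝓞 F) F (μ : 𝓞 F))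
        - v j (algebraMap (𝓞 F) F (μ' : 𝓞 F)) = 0
    · obtain ⟨j, hj⟩ := hzero
      rw [Finset.prod_eq_zero (Finset.mem_univ j) hj] at h1
      simp only [abs_zero] at h1
      linarith
    · push_neg at hzero
      rw [Finset.abs_prod] at h1
      have hlt : ∏ j, |v j (algebraMap (𝓞 F) F (μ : 𝓞 F))
          - v j (algebraMap (𝓞 F) F (μ' : 𝓞 F))| < ∏ _j : Fin n, (1:ℝ) :=
        Finset.prod_lt_prod_of_nonempty (fun j _ => abs_pos.mpr (hzero j))
          (fun j _ => h2 j) Finset.univ_nonempty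
      rw [Finset.prod_const_one] at hlt
      linarith
  have hle : ∀ μ : {μ : 𝓞 F // ∀ j, 0 < v j (algebraMap (𝓞 F) F μ)},
      ‖(sigmaOne F (μ : 𝓞 F) : ℂ) * Complex.exp (2 * Real.pi * Complex.I *
        ∑ j, ((v j (algebraMap (𝓞 F) F (μ : 𝓞 F)) / v j (algebraMap (𝓞 F) F δ) : ℝ) : ℂ)
          * z j)‖ ≤ G (Ψ μ) := by
    intro μ
    obtain ⟨hσ0, hσle⟩ := sigmaOne_nonneg_le F (μ : 𝓞 F) (hμne μ)
    have hre : (2 * (Real.pi : ℂ) * Complex.I *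
        ∑ j, ((v j (algebraMap (𝓞 F) F (μ : 𝓞 F)) / v j (algebraMap (𝓞 F) F δ) : ℝ) : ℂ)
          * z j).re = ∑ j, -(c j * v j (algebraMap (𝓞 F) F (μ : 𝓞 F))) := by
      rw [show ∀ W : ℂ, (2 * (Real.pi : ℂ) * Complex.I * W).re = -(2 * Real.pi * W.im) from
        fun W => by simp [Complex.mul_re, Complex.mul_im]]
      rw [Complex.im_sum]
      rw [show (∑ j, (((v j (algebraMap (𝓞 F) F (μ : 𝓞 F)) / v j (algebraMap (𝓞 F) F δ) : ℝ)
          : ℂ) * z j).im) = ∑ j, (v j (algebraMap (𝓞 F) F (μ : 𝓞 F))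
            / v j (algebraMap (𝓞 F) F δ)) * (z j).im from
        Finset.sum_congr rfl fun j _ => by rw [Complex.im_ofReal_mul]]
      rw [Finset.mul_sum, ← Finset.sum_neg_distrib]
      refine Finset.sum_congr rfl fun j _ => ?_
      rw [hc]
      ring
    rw [norm_mul, Complex.norm_of_nonneg hσ0,
      Complex.norm_exp, hre, Real.exp_sum]
    calc sigmaOne F (μ : 𝓞 F)
          * ∏ j, Real.exp (-(c j * v j (algebraMap (𝓞 F) F (μ : 𝓞 F))))
        ≤ (∏ j, (v j (algebraMap (𝓞 F) F (μ : 𝓞 F))) ^ 2)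
          * ∏ j, Real.exp (-(c j * v j (algebraMap (𝓞 F) F (μ : 𝓞 F)))) := by
          apply mul_le_mul_of_nonneg_right _
            (Finset.prod_nonneg fun j _ => (Real.exp_pos _).le)
          calc sigmaOne F (μ : 𝓞 F)
              ≤ ((Ideal.absNorm (Ideal.span {(μ : 𝓞 F)}) : ℝ)) ^ 2 := hσle
            _ = (∏ j, v j (algebraMap (𝓞 F) F (μ : 𝓞 F))) ^ 2 := by rw [hprod μ]
            _ = ∏ j, (v j (algebraMap (𝓞 F) F (μ : 𝓞 F))) ^ 2 :=
                (Finset.prod_pow _ _ _).symm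
      _ = ∏ j, ((v j (algebraMap (𝓞 F) F (μ : 𝓞 F))) ^ 2
          * Real.exp (-(c j * v j (algebraMap (𝓞 F) F (μ : 𝓞 F))))) :=
          (Finset.prod_mul_distrib).symm
      _ ≤ G (Ψ μ) := by
          rw [hG]
          apply Finset.prod_le_prod
          · intro j _
            positivity
          · intro j _
            have hx0 : 0 ≤ v j (algebraMap (𝓞 F) F (μ : 𝓞 F)) := (μ.2 j).le
            have hfl : ((Ψ μ j : ℕ) : ℝ) ≤ v j (algebraMap (𝓞 F) F (μ : 𝓞 F)) :=
              Nat.floor_le hx0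
            have hfl2 : v j (algebraMap (𝓞 F) F (μ : 𝓞 F)) < ((Ψ μ j : ℕ) : ℝ) + 1 :=
              Nat.lt_floor_add_one _
            apply mul_le_mul
            · exact pow_le_pow_left₀ hx0 hfl2.le 2
            · rw [Real.exp_le_exp, neg_mul]
              exact neg_le_neg (mul_le_mul_of_nonneg_left hfl (hcpos j).le)
            · exact (Real.exp_pos _).le
            · positivity
  exact Summable.of_nonneg_of_le (fun μ => norm_nonneg _) hle (hGsum.comp_injective hΨinj)
end
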